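/- arXiv:2604.04900 — 2 statements merged into one kernel-verified Lean document; each statement's English description precedes it below -/
import Mathlib

section
/- For k ≥ 2 and n ≥ 1, the number of k-dimensional balanced ballot paths of length kn with semisymmetric height exactly ⌈k/2⌉·⌊k/2⌋·n is at least C_{⌈k/2⌉,n}·C_{⌊k/2⌋,n}, where C_{j,n} denotes the number of j-dimensional balanced ballot paths of length jn. -/
open scoped Classical

/-- Number of steps among the first `i` steps of `P` equal to basis vector `j`. -/
def cnt (k n : ℕ) (P : Fin (k*n) → Fin k) (j : Fin k) (i : ℕ) : ℕ :=
  (Finset.univ.filter (fun t : Fin (k*n) => (t : ℕ) < i ∧ P t = j)).card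

/-- `P` is a `k`-dimensional balanced ballot path of length `k*n`:
each basis vector appears exactly `n` times, and every partial sum is
weakly decreasing in coordinates. -/
def IsBBP (k n : ℕ) (P : Fin (k*n) → Fin k) : Prop :=
  (∀ j : Fin k, cnt k n P j (k*n) = n) ∧
  (∀ i ≤ k*n, ∀ j j' : Fin k, j ≤ j' → cnt k n P j' i ≤ cnt k n P j i)

/-- Semisymmetric height `g_k` of the `i`-th intermediate point of `P`. -/
def ptHt (k n : ℕ) (P : Fin (k*n) → Fin k) (i : ℕ) : ℤ :=
  ∑ j : Fin k, ((k : ℤ) - 1 - 2*(j : ℕ)) * (cnt k n P j i)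

/-- The semisymmetric height of path `P` is at most `u`. -/
def HeightLE (k n : ℕ) (P : Fin (k*n) → Fin k) (u : ℤ) : Prop :=
  ∀ i ≤ k*n, ptHt k n P i ≤ u

/-- The semisymmetric height of path `P` is exactly `u`. -/
def HeightEq (k n : ℕ) (P : Fin (k*n) → Fin k) (u : ℤ) : Prop :=
  HeightLE k n P u ∧ ∃ i ≤ k*n, ptHt k n P i = u

/-- The number of `j`-dimensional balanced ballot paths of length `j*n`. -/
noncomputable def Cdim (j n : ℕ) : ℕ :=
  Nat.card {P : Fin (j*n) → Fin j // IsBBP j n P}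


lemma cnt_le_total (k n : ℕ) (P : Fin (k*n) → Fin k) (j : Fin k) (i : ℕ) :
    cnt k n P j i ≤ cnt k n P j (k*n) := by
  apply Finset.card_le_card
  intro t ht
  simp only [Finset.mem_filter, Finset.mem_univ, true_and] at *
  exact ⟨t.isLt, ht.2⟩

lemma cnt_zero (k n : ℕ) (P : Fin (k*n) → Fin k) (j : Fin k) : cnt k n P j 0 = 0 := by
  simp [cnt]

lemma key_mul {k a n : ℕ} (ha : a ≤ k) : a*n + (k-a)*n = k*n := by
  rw [← Nat.add_mul, Nat.add_sub_cancel' ha]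

noncomputable def glue (k a n : ℕ) (ha : a ≤ k) (P : Fin (a*n) → Fin a)
    (Q : Fin ((k-a)*n) → Fin (k-a)) (t : Fin (k*n)) : Fin k :=
  if h : (t : ℕ) < a*n then Fin.castLE ha (P ⟨t, h⟩)
  else
    let s : Fin ((k-a)*n) := ⟨(t : ℕ) - a*n, by
      have := key_mul (n := n) ha; have := t.isLt; omega⟩
    ⟨a + (Q s : ℕ), by have := (Q s).isLt; omega⟩

lemma glue_lt {k a n : ℕ} (ha : a ≤ k) (P : Fin (a*n) → Fin a)
    (Q : Fin ((k-a)*n) → Fin (k-a)) {t : Fin (k*n)} (h : (t : ℕ) < a*n) :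
    glue k a n ha P Q t = Fin.castLE ha (P ⟨t, h⟩) := by
  simp [glue, dif_pos h]

lemma glue_ge {k a n : ℕ} (ha : a ≤ k) (P : Fin (a*n) → Fin a)
    (Q : Fin ((k-a)*n) → Fin (k-a)) {t : Fin (k*n)} (h : ¬ (t : ℕ) < a*n)
    (pf : (t : ℕ) - a*n < (k-a)*n) :
    ((glue k a n ha P Q t : Fin k) : ℕ) = a + (Q ⟨(t : ℕ) - a*n, pf⟩ : ℕ) := by
  simp [glue, dif_neg h]

lemma cnt_glue_lo {k a n : ℕ} (ha : a ≤ k) (P : Fin (a*n) → Fin a)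
    (Q : Fin ((k-a)*n) → Fin (k-a)) (j₀ : Fin a) (i : ℕ) :
    cnt k n (glue k a n ha P Q) (Fin.castLE ha j₀) i = cnt a n P j₀ (min i (a*n)) := by
  have han : a*n ≤ k*n := Nat.mul_le_mul_right n ha
  have hkey := key_mul (n := n) ha
  unfold cnt
  -- every t in first filter has t < a*n
  have hlt : ∀ t : Fin (k*n), (t : ℕ) < i ∧ glue k a n ha P Q t = Fin.castLE ha j₀ →
      (t : ℕ) < a*n := by
    intro t ht
    by_contra h
    have pf : (t : ℕ) - a*n < (k-a)*n := by have := t.isLt; omega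
    have := glue_ge ha P Q h pf
    rw [ht.2] at this
    simp only [Fin.coe_castLE] at this
    have := j₀.isLt
    omega
  refine Finset.card_bij' (fun t ht => (⟨(t : ℕ), ?_⟩ : Fin (a*n)))
    (fun s hs => (⟨(s : ℕ), lt_of_lt_of_le s.isLt han⟩ : Fin (k*n))) ?_ ?_ ?_ ?_
  · simp only [Finset.mem_filter, Finset.mem_univ, true_and] at ht
    exact hlt t ht
  · intro t ht
    simp only [Finset.mem_filter, Finset.mem_univ, true_and] at ht ⊢
    have h := hlt t ht
    have := glue_lt ha P Q h
    rw [ht.2] at this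
    have hP : P ⟨(t : ℕ), h⟩ = j₀ := by
      have := congrArg Fin.val this
      simp only [Fin.coe_castLE] at this
      exact Fin.ext this.symm
    exact ⟨lt_min ht.1 h, hP⟩
  · intro s hs
    simp only [Finset.mem_filter, Finset.mem_univ, true_and] at hs ⊢
    have h1 : (s : ℕ) < i := lt_of_lt_of_le hs.1 (min_le_left _ _)
    have h2 : (s : ℕ) < a*n := s.isLt
    refine ⟨h1, ?_⟩
    rw [glue_lt ha P Q h2]
    congr 1
    rw [← hs.2]
  · intro t ht; rfl
  · intro s hs; rfl

lemma cnt_glue_hi {k a n : ℕ} (ha : a ≤ k) (P : Fin (a*n) → Fin a)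
    (Q : Fin ((k-a)*n) → Fin (k-a)) (j₁ : Fin (k-a)) (i : ℕ) :
    cnt k n (glue k a n ha P Q) ⟨a + (j₁ : ℕ), by have := j₁.isLt; omega⟩ i
      = cnt (k-a) n Q j₁ (i - a*n) := by
  have han : a*n ≤ k*n := Nat.mul_le_mul_right n ha
  have hkey := key_mul (n := n) ha
  unfold cnt
  have hge : ∀ t : Fin (k*n), (t : ℕ) < i ∧ glue k a n ha P Q t =
      (⟨a + (j₁ : ℕ), by have := j₁.isLt; omega⟩ : Fin k) → a*n ≤ (t : ℕ) := by
    intro t ht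
    by_contra h
    push_neg at h
    have hg := glue_lt ha P Q h
    rw [ht.2] at hg
    have := congrArg Fin.val hg
    simp only [Fin.coe_castLE] at this
    have := (P ⟨(t : ℕ), h⟩).isLt
    omega
  refine Finset.card_bij'
    (fun t ht => (⟨(t : ℕ) - a*n, by
      have h1 := t.isLt
      have h2 := key_mul (n := n) ha
      have h3 : a*n ≤ (t : ℕ) := hge t (by simpa using ht)
      omega⟩ : Fin ((k-a)*n)))
    (fun s hs => (⟨a*n + (s : ℕ), by have h1 := s.isLt; have h2 := key_mul (n := n) ha; omega⟩ : Fin (k*n))) ?_ ?_ ?_ ?_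
  · intro t ht
    simp only [Finset.mem_filter, Finset.mem_univ, true_and] at ht ⊢
    have h := hge t ht
    have pf : (t : ℕ) - a*n < (k-a)*n := by have := t.isLt; omega
    have hg := glue_ge ha P Q (by omega) pf
    rw [ht.2] at hg
    simp only [Fin.val_mk] at hg
    have hQv : (Q ⟨(t : ℕ) - a*n, pf⟩ : ℕ) = (j₁ : ℕ) := by omega
    exact ⟨by omega, Fin.ext hQv⟩
  · intro s hs
    simp only [Finset.mem_filter, Finset.mem_univ, true_and] at hs ⊢
    have h1 : (s : ℕ) < i - a*n := hs.1
    have hnl : ¬ ((((⟨a*n + (s : ℕ), by have := s.isLt; omega⟩ : Fin (k*n))) : ℕ) < a*n) := by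
      simp only [Fin.val_mk]; omega
    have pf : ((((⟨a*n + (s : ℕ), by have := s.isLt; omega⟩ : Fin (k*n))) : ℕ)) - a*n
        < (k-a)*n := by
      simp only [Fin.val_mk]; have := s.isLt; omega
    have hg := glue_ge ha P Q hnl pf
    refine ⟨by omega, ?_⟩
    apply Fin.ext
    rw [hg]
    simp only [Fin.val_mk]
    have he : (⟨a*n + (s : ℕ) - a*n, pf⟩ : Fin ((k-a)*n)) = s := Fin.ext (by simp)
    rw [he, hs.2]
  · intro t ht
    simp only [Finset.mem_filter, Finset.mem_univ, true_and] at ht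
    have := hge t ht
    exact Fin.ext (by simp only [Fin.val_mk]; omega)
  · intro s hs
    exact Fin.ext (by simp only [Fin.val_mk]; omega)

lemma cnt_glue_of_lt {k a n : ℕ} (ha : a ≤ k) (P : Fin (a*n) → Fin a)
    (Q : Fin ((k-a)*n) → Fin (k-a)) (j : Fin k) (h : (j : ℕ) < a) (i : ℕ) :
    cnt k n (glue k a n ha P Q) j i = cnt a n P ⟨(j : ℕ), h⟩ (min i (a*n)) := by
  have hj : j = Fin.castLE ha ⟨(j : ℕ), h⟩ := Fin.ext rfl
  conv_lhs => rw [hj]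
  exact cnt_glue_lo ha P Q _ _

lemma cnt_glue_of_ge {k a n : ℕ} (ha : a ≤ k) (P : Fin (a*n) → Fin a)
    (Q : Fin ((k-a)*n) → Fin (k-a)) (j : Fin k) (h : a ≤ (j : ℕ)) (i : ℕ) :
    cnt k n (glue k a n ha P Q) j i
      = cnt (k-a) n Q ⟨(j : ℕ) - a, by have := j.isLt; omega⟩ (i - a*n) := by
  have hj : j = (⟨a + ((⟨(j : ℕ) - a, by have := j.isLt; omega⟩ : Fin (k-a)) : ℕ),
      by have := j.isLt; simp only [Fin.val_mk]; omega⟩ : Fin k) :=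
    Fin.ext (by simp only [Fin.val_mk]; omega)
  conv_lhs => rw [hj]
  exact cnt_glue_hi ha P Q _ _

lemma glue_IsBBP {k a n : ℕ} (ha : a ≤ k) {P : Fin (a*n) → Fin a}
    {Q : Fin ((k-a)*n) → Fin (k-a)} (hP : IsBBP a n P) (hQ : IsBBP (k-a) n Q) :
    IsBBP k n (glue k a n ha P Q) := by
  have han : a*n ≤ k*n := Nat.mul_le_mul_right n ha
  have hkey := key_mul (n := n) ha
  constructor
  · intro j
    by_cases h : (j : ℕ) < a
    · rw [cnt_glue_of_lt ha P Q j h, min_eq_right han, hP.1]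
    · rw [cnt_glue_of_ge ha P Q j (by omega)]
      have hz : k*n - a*n = (k-a)*n := by omega
      rw [hz, hQ.1]
  · intro i hi j j' hjj'
    have hjv : (j : ℕ) ≤ (j' : ℕ) := hjj'
    by_cases h' : (j' : ℕ) < a
    · have h : (j : ℕ) < a := by omega
      rw [cnt_glue_of_lt ha P Q j h, cnt_glue_of_lt ha P Q j' h']
      exact hP.2 (min i (a*n)) (min_le_right _ _) _ _ (by rw [Fin.mk_le_mk]; exact hjv)
    · rw [cnt_glue_of_ge ha P Q j' (by omega)]
      by_cases h : (j : ℕ) < a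
      · rw [cnt_glue_of_lt ha P Q j h]
        rcases Nat.lt_or_ge (a*n) i with hian | hian
        · rw [min_eq_right (by omega)]
          calc cnt (k-a) n Q _ (i - a*n) ≤ cnt (k-a) n Q _ ((k-a)*n) := cnt_le_total ..
            _ = n := hQ.1 _
            _ = cnt a n P _ (a*n) := (hP.1 _).symm
        · have hz : i - a*n = 0 := by omega
          rw [hz, cnt_zero]
          exact Nat.zero_le _
      · rw [cnt_glue_of_ge ha P Q j (by omega)]
        exact hQ.2 (i - a*n) (by omega) _ _ (by rw [Fin.mk_le_mk]; omega)

lemma sum_coeff (k : ℕ) (a : ℕ) :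
    ∑ j ∈ Finset.range a, ((k : ℤ) - 1 - 2*(j : ℤ)) = a * ((k : ℤ) - a) := by
  induction a with
  | zero => simp
  | succ m ih =>
    rw [Finset.sum_range_succ, ih]
    push_cast
    ring

lemma sum_if (k a n : ℕ) (ha : a ≤ k) :
    ∑ j : Fin k, (if (j : ℕ) < a then ((k : ℤ) - 1 - 2*((j : ℕ) : ℤ))*(n : ℤ) else 0)
      = ((a * (k - a) * n : ℕ) : ℤ) := by
  rw [Fin.sum_univ_eq_sum_range
    (fun j => if j < a then ((k : ℤ) - 1 - 2*(j : ℤ))*(n : ℤ) else 0) k]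
  have h2 : (Finset.range k).filter (fun j => j < a) = Finset.range a := by
    ext x
    simp only [Finset.mem_filter, Finset.mem_range]
    omega
  rw [← Finset.sum_filter, h2, ← Finset.sum_mul, sum_coeff]
  push_cast [Nat.cast_sub ha]
  ring

lemma cnt_le_n {k n : ℕ} {R : Fin (k*n) → Fin k} (hR : IsBBP k n R) (j : Fin k) (i : ℕ) :
    cnt k n R j i ≤ n := (cnt_le_total k n R j i).trans_eq (hR.1 j)

lemma ptHt_le {k n : ℕ} {R : Fin (k*n) → Fin k} (hR : IsBBP k n R) (i : ℕ) :
    ptHt k n R i ≤ (((k+1)/2 * (k - (k+1)/2) * n : ℕ) : ℤ) := by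
  set a := (k+1)/2 with hadef
  have ha : a ≤ k := by omega
  rw [← sum_if k a n ha]
  unfold ptHt
  apply Finset.sum_le_sum
  intro j _
  by_cases h : (j : ℕ) < a
  · rw [if_pos h]
    have hc : (0 : ℤ) ≤ (k : ℤ) - 1 - 2*((j : ℕ) : ℤ) := by
      have := j.isLt; omega
    exact mul_le_mul_of_nonneg_left (by exact_mod_cast cnt_le_n hR j i) hc
  · rw [if_neg h]
    have hc : ((k : ℤ) - 1 - 2*((j : ℕ) : ℤ)) ≤ 0 := by
      push_neg at h
      have h2 : 2*a ≥ k := by omega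
      omega
    exact mul_nonpos_of_nonpos_of_nonneg hc (by positivity)

lemma glue_ptHt {k a n : ℕ} (ha : a ≤ k) {P : Fin (a*n) → Fin a}
    {Q : Fin ((k-a)*n) → Fin (k-a)} (hP : IsBBP a n P) (hQ : IsBBP (k-a) n Q) :
    ptHt k n (glue k a n ha P Q) (a*n) = ((a * (k - a) * n : ℕ) : ℤ) := by
  rw [← sum_if k a n ha]
  unfold ptHt
  apply Finset.sum_congr rfl
  intro j _
  by_cases h : (j : ℕ) < a
  · rw [if_pos h, cnt_glue_of_lt ha P Q j h, min_self, hP.1]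
  · rw [if_neg h, cnt_glue_of_ge ha P Q j (by omega), Nat.sub_self, cnt_zero]
    simp

theorem stmt18 (k n : ℕ) (hk : 2 ≤ k) (hn : 1 ≤ n) :
    Cdim ((k+1)/2) n * Cdim (k/2) n ≤
      Nat.card {P : Fin (k*n) → Fin k // IsBBP k n P ∧
        HeightEq k n P ((((k+1)/2) * (k/2) * n : ℕ) : ℤ)} := by
  have ha : (k+1)/2 ≤ k := by omega
  have hb : k/2 = k - (k+1)/2 := by omega
  rw [hb]
  set a := (k+1)/2 with hadef
  have han : a*n ≤ k*n := Nat.mul_le_mul_right n ha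
  have hkey := key_mul (n := n) ha
  set T := {R : Fin (k*n) → Fin k // IsBBP k n R ∧
      HeightEq k n R ((a * (k - a) * n : ℕ) : ℤ)} with hT
  set S := ({P : Fin (a*n) → Fin a // IsBBP a n P} ×
      {Q : Fin ((k-a)*n) → Fin (k-a) // IsBBP (k-a) n Q}) with hS
  have hF : ∃ F : S → T, Function.Injective F := by
    refine ⟨fun pq => ⟨glue k a n ha pq.1.1 pq.2.1, glue_IsBBP ha pq.1.2 pq.2.2, ?_, ?_⟩, ?_⟩
    · intro i _
      exact ptHt_le (glue_IsBBP ha pq.1.2 pq.2.2) i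
    · exact ⟨a*n, han, glue_ptHt ha pq.1.2 pq.2.2⟩
    · rintro ⟨⟨P, hP⟩, ⟨Q, hQ⟩⟩ ⟨⟨P', hP'⟩, ⟨Q', hQ'⟩⟩ h
      have hgl : glue k a n ha P Q = glue k a n ha P' Q' := congrArg Subtype.val h
      have hPP : P = P' := by
        funext s
        have hs : ((⟨(s : ℕ), lt_of_lt_of_le s.isLt han⟩ : Fin (k*n)) : ℕ) < a*n := s.isLt
        have h1 := glue_lt ha P Q hs
        have h2 := glue_lt ha P' Q' hs
        rw [congrFun hgl _] at h1
        have := h1.symm.trans h2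
        exact Fin.castLE_injective ha this
      have hQQ : Q = Q' := by
        funext s
        have hnl : ¬ ((((⟨a*n + (s : ℕ), by have := s.isLt; omega⟩ : Fin (k*n))) : ℕ) < a*n) := by
          simp only [Fin.val_mk]; omega
        have pf : ((((⟨a*n + (s : ℕ), by have := s.isLt; omega⟩ : Fin (k*n))) : ℕ)) - a*n
            < (k-a)*n := by
          simp only [Fin.val_mk]; have := s.isLt; omega
        have h1 := glue_ge ha P Q hnl pf
        have h2 := glue_ge ha P' Q' hnl pf
        rw [congrFun hgl _] at h1
        have h3 := h1.symm.trans h2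
        have he : (⟨(((⟨a*n + (s : ℕ), by have := s.isLt; omega⟩ : Fin (k*n))) : ℕ) - a*n, pf⟩
            : Fin ((k-a)*n)) = s := Fin.ext (by simp)
        rw [he] at h3
        exact Fin.ext (by omega)
      subst hPP
      subst hQQ
      rfl
  obtain ⟨F, hFinj⟩ := hF
  calc Cdim a n * Cdim (k-a) n = Nat.card S := by rw [hS, Nat.card_prod]; rfl
    _ ≤ Nat.card T := Nat.card_le_card_of_injective F hFinj
end

section
/- For even k ≥ 2 and n ≥ 1, the number of k-dimensional balanced ballot paths of length kn with exactly one semisymmetric peak equals (C_{k/2,n})², where C_{j,n} is the number of j-dimensional balanced ballot paths of length jn. A path has exactly one semisymmetric peak if and only if its first (k/2)·n steps are all semisymmetric up-steps and its last (k/2)·n steps are all semisymmetric down-steps. -/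
open scoped Classical

/-- Number of semisymmetric peaks of `P`: up-steps (index `< k/2`) immediately
followed by a down-step (index `≥ k/2`). -/
noncomputable def numPeaks (k n : ℕ) (P : Fin (k*n) → Fin k) : ℕ :=
  (Finset.univ.filter (fun t : Fin (k*n) =>
    (P t : ℕ) < k/2 ∧ ∃ h : (t : ℕ) + 1 < k*n, k/2 ≤ (P ⟨(t : ℕ) + 1, h⟩ : ℕ))).card

/-!
Write `k = 2m`. The ballot condition forces the first step of a balanced ballot path to be `e₁`
and the last to be `e_k` (comparing the counts of `e₁` after one step, and of `e_k` one step
before the end). So the up/down pattern of the path starts with an up-step and ends with a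
down-step, and a single up-to-down switch forces it to be `up^a down^b`; then `a = mn`, since
exactly `mn` steps go in the first `m` directions. Such a path is precisely an `m`-dimensional
balanced ballot path in the up-directions followed by one in the (shifted) down-directions.
-/

open Finset

section StepCount

variable {α : Type*} [DecidableEq α] {N : ℕ}

def stepCount (u : Fin N → α) (x : α) (i : ℕ) : ℕ :=
  #{t : Fin N | (t : ℕ) < i ∧ u t = x}

theorem cnt_eq_stepCount {k n : ℕ} (P : Fin (k * n) → Fin k) : cnt k n P = stepCount P := rfl

@[simp] theorem stepCount_zero (u : Fin N → α) (x : α) : stepCount u x 0 = 0 := by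
  simp [stepCount]

theorem stepCount_succ (u : Fin N → α) (x : α) {i : ℕ} (hi : i < N) :
    stepCount u x (i + 1) = stepCount u x i + if u ⟨i, hi⟩ = x then 1 else 0 := by
  unfold stepCount
  split_ifs with h
  · rw [← card_insert_of_notMem (s := {t : Fin N | (t : ℕ) < i ∧ u t = x}) (a := ⟨i, hi⟩)
      (by simp)]
    congr 1
    ext t
    simp only [mem_filter, mem_univ, true_and, mem_insert, Fin.ext_iff]
    grind
  · rw [add_zero]
    congr 1
    ext t
    simp only [mem_filter, mem_univ, true_and]
    grind

theorem stepCount_mono (u : Fin N → α) (x : α) : Monotone (stepCount u x) := fun _ _ hij =>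
  card_le_card (monotone_filter_right _ fun _ _ h => ⟨h.1.trans_le hij, h.2⟩)

theorem stepCount_of_le (u : Fin N → α) (x : α) {i : ℕ} (hi : N ≤ i) :
    stepCount u x i = stepCount u x N := by
  unfold stepCount
  congr 1
  ext t
  simp [t.isLt.trans_le hi]

theorem stepCount_comp_cast {M : ℕ} (u : Fin N → α) (x : α) (h : M = N) (i : ℕ) :
    stepCount (u ∘ Fin.cast h) x i = stepCount u x i := by
  subst h; rfl

theorem stepCount_comp_of_injective {β : Type*} [DecidableEq β] (u : Fin N → α) (x : α)
    {f : α → β} (hf : Function.Injective f) (i : ℕ) :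
    stepCount (f ∘ u) (f x) i = stepCount u x i := by
  simp [stepCount, hf.eq_iff]

theorem stepCount_comp_eq_zero {β γ : Type*} [DecidableEq γ] (u : Fin N → β) {f : β → γ}
    {y : γ} (hy : y ∉ Set.range f) (i : ℕ) : stepCount (f ∘ u) y i = 0 := by
  simp only [stepCount, card_eq_zero, filter_eq_empty_iff]
  exact fun t _ h => hy ⟨_, h.2⟩

theorem stepCount_append {a b : ℕ} (u : Fin a → α) (v : Fin b → α) (x : α) (i : ℕ) :
    stepCount (Fin.append u v) x i = stepCount u x i + stepCount v x (i - a) := by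
  simp only [stepCount, card_filter, Fin.sum_univ_add, Fin.append_left, Fin.append_right,
    Fin.val_castAdd, Fin.val_natAdd]
  congr 1
  simp only [Nat.lt_sub_iff_add_lt']

end StepCount

section BallotPath

variable {k n : ℕ} {P : Fin (k * n) → Fin k}

theorem IsBBP.cnt_of_le (hP : IsBBP k n P) (j : Fin k) {i : ℕ} (hi : k * n ≤ i) :
    cnt k n P j i = n := by
  rw [cnt_eq_stepCount, stepCount_of_le P j hi, ← cnt_eq_stepCount, hP.1 j]

theorem IsBBP.cnt_le (hP : IsBBP k n P) (j : Fin k) (i : ℕ) : cnt k n P j i ≤ n :=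
  (stepCount_mono P j (le_max_left i (k * n))).trans_eq (hP.cnt_of_le j (le_max_right _ _))

theorem IsBBP.val_first_step (hP : IsBBP k n P) (h : 0 < k * n) : (P ⟨0, h⟩ : ℕ) = 0 := by
  have hk : 0 < k := Nat.pos_of_mul_pos_right h
  have hballot := hP.2 1 h ⟨0, hk⟩ (P ⟨0, h⟩) (Fin.mk_le_mk.2 (Nat.zero_le _))
  simp only [cnt_eq_stepCount, stepCount_succ P _ h, stepCount_zero] at hballot
  have h0 : P ⟨0, h⟩ = ⟨0, hk⟩ := by
    by_contra hne
    simp [hne] at hballot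
  rw [h0]

theorem IsBBP.val_last_step (hP : IsBBP k n P) (h : 0 < k * n) :
    (P ⟨k * n - 1, Nat.sub_one_lt_of_lt h⟩ : ℕ) = k - 1 := by
  have hk : 0 < k := Nat.pos_of_mul_pos_right h
  have hn : 0 < n := Nat.pos_of_mul_pos_left h
  set j := P ⟨k * n - 1, Nat.sub_one_lt_of_lt h⟩
  have htotal : ∀ x, cnt k n P x (k * n - 1) + (if j = x then 1 else 0) = n := fun x => by
    have := stepCount_succ P x (Nat.sub_one_lt_of_lt h)
    rw [Nat.sub_add_cancel h] at this
    rw [cnt_eq_stepCount, ← this, ← cnt_eq_stepCount, hP.1]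
  by_contra hne
  have hlast : j ≠ ⟨k - 1, Nat.sub_one_lt_of_lt hk⟩ := fun e => hne (congrArg Fin.val e)
  have hballot := hP.2 (k * n - 1) (Nat.sub_le _ _) j ⟨k - 1, Nat.sub_one_lt_of_lt hk⟩
    (Fin.mk_le_mk.2 (Nat.le_sub_one_of_lt j.isLt))
  have h1 := htotal j
  have h2 := htotal ⟨k - 1, Nat.sub_one_lt_of_lt hk⟩
  simp only [if_true, if_neg hlast] at h1 h2
  omega

theorem IsBBP.card_filter_val_lt (hP : IsBBP k n P) {m : ℕ} (hm : m ≤ k) :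
    #{t | (P t : ℕ) < m} = m * n := by
  rw [card_eq_sum_card_fiberwise (f := P) (t := {j : Fin k | (j : ℕ) < m})
    (fun t ht => by simpa using ht)]
  have hfiber : ∀ j ∈ ({j : Fin k | (j : ℕ) < m} : Finset (Fin k)),
      #{t ∈ {t | (P t : ℕ) < m} | P t = j} = n := fun j hj => by
    refine Eq.trans ?_ (hP.1 j)
    congr 1
    ext t
    simp only [mem_filter, mem_univ, true_and] at hj ⊢
    exact ⟨fun h => ⟨t.isLt, h.2⟩, fun h => ⟨h.2 ▸ hj, h.2⟩⟩
  rw [sum_congr rfl hfiber, sum_const, smul_eq_mul, Fin.card_filter_val_lt, min_eq_right hm]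

end BallotPath

section Descents

variable {p : ℕ → Prop}

theorem exists_descent_of_le {u v : ℕ} (huv : u ≤ v) (hu : p u) (hv : ¬ p v) :
    ∃ t, u ≤ t ∧ t < v ∧ p t ∧ ¬ p (t + 1) := by
  induction v, huv using Nat.le_induction with
  | base => exact absurd hu hv
  | succ v huv ih =>
    by_cases hp : p v
    · exact ⟨v, huv, v.lt_succ_self, hp, hv⟩
    · obtain ⟨t, hut, htv, ht⟩ := ih hp
      exact ⟨t, hut, htv.trans v.lt_succ_self, ht⟩

theorem card_descents_eq_one_iff {N : ℕ} (h0 : p 0) (hN : ∀ t, p t → t + 1 < N) :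
    #{t ∈ range (N - 1) | p t ∧ ¬ p (t + 1)} = 1 ↔ ∃ a, ∀ t, p t ↔ t < a := by
  have hnotN : ¬ p (N - 1) := fun h => by have := hN _ h; omega
  constructor
  · intro hone
    have hanti : Antitone p := antitone_nat_of_succ_le fun s hs => by
      by_contra hns
      have hsN := hN _ hs
      obtain ⟨t₁, -, ht₁s, ht₁⟩ := exists_descent_of_le (Nat.zero_le s) h0 hns
      obtain ⟨t₂, hst₂, ht₂N, ht₂⟩ := exists_descent_of_le (by omega) hs hnotN
      have := card_le_one.1 hone.le t₁ (by simp [ht₁]; omega) t₂ (by simp [ht₂]; omega)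
      omega
    have hex : ∃ t, ¬ p t := ⟨N - 1, hnotN⟩
    refine ⟨Nat.find hex, fun t =>
      ⟨fun ht => ?_, fun ht => not_not.1 (Nat.find_min hex ht)⟩⟩
    by_contra hle
    exact Nat.find_spec hex (hanti (not_lt.1 hle) ht)
  · rintro ⟨a, ha⟩
    have ha0 : 0 < a := (ha 0).1 h0
    have haN : a - 1 + 1 < N := hN _ ((ha _).2 (by omega))
    rw [card_eq_one]
    refine ⟨a - 1, ?_⟩
    ext t
    simp only [ha, mem_filter, mem_range, mem_singleton]
    omega

end Descents

section Peaks

variable {m n : ℕ}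

-- Defined on all of `ℕ` (false past the end) so that descents can be counted in a `range`.
def IsUpStep {N : ℕ} (P : Fin N → Fin (m + m)) (t : ℕ) : Prop :=
  ∃ h : t < N, (P ⟨t, h⟩ : ℕ) < m

theorem isUpStep_val_iff {N : ℕ} {P : Fin N → Fin (m + m)} (t : Fin N) :
    IsUpStep P t ↔ (P t : ℕ) < m :=
  ⟨fun ⟨_, h⟩ => h, fun h => ⟨t.isLt, h⟩⟩

theorem numPeaks_eq_card_descents (P : Fin ((m + m) * n) → Fin (m + m)) :
    numPeaks (m + m) n P
      = #{t ∈ range ((m + m) * n - 1) | IsUpStep P t ∧ ¬ IsUpStep P (t + 1)} := by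
  have hhalf : (m + m) / 2 = m := by omega
  unfold numPeaks
  refine card_bij (fun t _ => t) (fun t ht => ?_) (fun _ _ _ _ => Fin.ext) (fun t ht => ?_)
  · simp only [hhalf, mem_filter, mem_univ, true_and, mem_range] at ht ⊢
    obtain ⟨hup, hlt, hdown⟩ := ht
    exact ⟨by omega, (isUpStep_val_iff t).2 hup, fun ⟨_, h⟩ => by omega⟩
  · simp only [mem_filter, mem_range] at ht
    obtain ⟨htN, ⟨hlt, hup⟩, hdown⟩ := ht
    refine ⟨⟨t, hlt⟩, ?_, rfl⟩
    simp only [hhalf, mem_filter, mem_univ, true_and]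
    exact ⟨hup, by omega, not_lt.1 fun h => hdown ⟨by omega, h⟩⟩

theorem IsBBP.numPeaks_eq_one_iff {P : Fin ((m + m) * n) → Fin (m + m)} (hP : IsBBP (m + m) n P)
    (hm : 0 < m) (hn : 0 < n) :
    numPeaks (m + m) n P = 1 ↔ ∀ t, (P t : ℕ) < m ↔ (t : ℕ) < m * n := by
  have hN : 0 < (m + m) * n := by positivity
  have hfirst : IsUpStep P 0 := ⟨hN, by rw [hP.val_first_step hN]; exact hm⟩
  have hlast : ∀ t, IsUpStep P t → t + 1 < (m + m) * n := by
    rintro t ⟨ht, hup⟩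
    by_contra hge
    obtain rfl : t = (m + m) * n - 1 := by omega
    have := hP.val_last_step hN
    omega
  rw [numPeaks_eq_card_descents, card_descents_eq_one_iff hfirst hlast]
  constructor
  · rintro ⟨a, ha⟩
    have haN : a ≤ (m + m) * n := by
      by_contra h
      obtain ⟨h', -⟩ := (ha _).2 (not_le.1 h)
      exact lt_irrefl _ h'
    have hup : ∀ t : Fin ((m + m) * n), (P t : ℕ) < m ↔ (t : ℕ) < a := fun t =>
      (isUpStep_val_iff t).symm.trans (ha t)
    have hcount := hP.card_filter_val_lt (m := m) (by omega)
    simp only [hup, Fin.card_filter_val_lt, min_eq_right haN] at hcount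
    rwa [← hcount]
  · intro h
    refine ⟨m * n, fun t =>
      ⟨fun ⟨ht, hup⟩ => (h _).1 hup, fun ht => ⟨?_, (h ⟨t, ?_⟩).2 ht⟩⟩⟩ <;>
      rw [add_mul] <;> omega

end Peaks

section Append

variable {m n : ℕ}

def appendUpDown (Q₁ Q₂ : Fin (m * n) → Fin m) : Fin ((m + m) * n) → Fin (m + m) :=
  Fin.append (Fin.castAdd m ∘ Q₁) (Fin.natAdd m ∘ Q₂) ∘ Fin.cast (add_mul m m n)

variable {Q₁ Q₂ : Fin (m * n) → Fin m}

theorem appendUpDown_cast_castAdd (t : Fin (m * n)) :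
    appendUpDown Q₁ Q₂ (Fin.cast (add_mul m m n).symm (Fin.castAdd (m * n) t))
      = Fin.castAdd m (Q₁ t) := by
  simp [appendUpDown]

theorem appendUpDown_cast_natAdd (t : Fin (m * n)) :
    appendUpDown Q₁ Q₂ (Fin.cast (add_mul m m n).symm (Fin.natAdd (m * n) t))
      = Fin.natAdd m (Q₂ t) := by
  simp [appendUpDown, -Fin.natAdd_eq_addNat]

theorem appendUpDown_val_lt_iff (t : Fin ((m + m) * n)) :
    (appendUpDown Q₁ Q₂ t : ℕ) < m ↔ (t : ℕ) < m * n := by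
  obtain ⟨s, rfl⟩ := (Fin.castOrderIso (add_mul m m n).symm).surjective t
  induction s using Fin.addCases with
  | left s => simp [appendUpDown_cast_castAdd, s.isLt]
  | right s => simp [appendUpDown_cast_natAdd, -Fin.natAdd_eq_addNat]

theorem appendUpDown_injective2 : Function.Injective2 (appendUpDown (m := m) (n := n)) := by
  intro Q₁ R₁ Q₂ R₂ h
  refine ⟨funext fun t => ?_, funext fun t => ?_⟩
  · simpa [appendUpDown_cast_castAdd] using
      congrFun h (Fin.cast (add_mul m m n).symm (Fin.castAdd (m * n) t))
  · simpa [appendUpDown_cast_natAdd, -Fin.natAdd_eq_addNat] using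
      congrFun h (Fin.cast (add_mul m m n).symm (Fin.natAdd (m * n) t))

theorem exists_appendUpDown_eq {P : Fin ((m + m) * n) → Fin (m + m)}
    (hP : ∀ t, (P t : ℕ) < m ↔ (t : ℕ) < m * n) :
    ∃ Q₁ Q₂, appendUpDown Q₁ Q₂ = P := by
  let P' := P ∘ Fin.cast (add_mul m m n).symm
  refine ⟨fun t => (P' (Fin.castAdd _ t)).castLT ((hP _).2 (by simp)),
    fun t => ⟨(P' (Fin.natAdd _ t) : ℕ) - m,
      by have := (P' (Fin.natAdd _ t)).isLt; omega⟩, ?_⟩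
  funext t
  obtain ⟨s, rfl⟩ := (Fin.castOrderIso (add_mul m m n).symm).surjective t
  induction s using Fin.addCases with
  | left s => simp [appendUpDown_cast_castAdd, P']
  | right s =>
    have := (hP (Fin.cast (add_mul m m n).symm (Fin.natAdd _ s))).not.2 (by simp)
    ext
    simp [appendUpDown_cast_natAdd, P', -Fin.natAdd_eq_addNat]
    omega

theorem cnt_appendUpDown_castAdd (j : Fin m) (i : ℕ) :
    cnt (m + m) n (appendUpDown Q₁ Q₂) (Fin.castAdd m j) i = cnt m n Q₁ j i := by
  rw [cnt_eq_stepCount, appendUpDown, stepCount_comp_cast, stepCount_append,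
    stepCount_comp_of_injective _ _ (Fin.castAdd_injective m m),
    stepCount_comp_eq_zero _ (fun ⟨x, hx⟩ => by simp [Fin.ext_iff] at hx; omega), add_zero,
    cnt_eq_stepCount]

theorem cnt_appendUpDown_natAdd (j : Fin m) (i : ℕ) :
    cnt (m + m) n (appendUpDown Q₁ Q₂) (Fin.natAdd m j) i = cnt m n Q₂ j (i - m * n) := by
  rw [cnt_eq_stepCount, appendUpDown, stepCount_comp_cast, stepCount_append,
    stepCount_comp_of_injective _ _ (Fin.natAdd_injective m m),
    stepCount_comp_eq_zero _ (fun ⟨x, hx⟩ => by simp [Fin.ext_iff] at hx; omega), zero_add,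
    cnt_eq_stepCount]

theorem IsBBP.of_appendUpDown (hP : IsBBP (m + m) n (appendUpDown Q₁ Q₂)) :
    IsBBP m n Q₁ ∧ IsBBP m n Q₂ := by
  obtain ⟨htotal, hballot⟩ := hP
  refine ⟨⟨fun j => ?_, fun i hi j j' hjj => ?_⟩,
    ⟨fun j => ?_, fun i hi j j' hjj => ?_⟩⟩
  · refine Eq.trans ?_ (htotal (Fin.castAdd m j))
    rw [cnt_appendUpDown_castAdd, cnt_eq_stepCount,
      stepCount_of_le Q₁ j (i := (m + m) * n) (by rw [add_mul]; omega)]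
  · simpa only [cnt_appendUpDown_castAdd] using
      hballot i (by rw [add_mul]; omega) (Fin.castAdd m j) (Fin.castAdd m j') hjj
  · refine Eq.trans ?_ (htotal (Fin.natAdd m j))
    rw [cnt_appendUpDown_natAdd, add_mul, Nat.add_sub_cancel]
  · simpa only [cnt_appendUpDown_natAdd, Nat.add_sub_cancel_left] using
      hballot (m * n + i) (by rw [add_mul]; omega) (Fin.natAdd m j) (Fin.natAdd m j')
        (Nat.add_le_add_left hjj m)

theorem IsBBP.appendUpDown (hQ₁ : IsBBP m n Q₁) (hQ₂ : IsBBP m n Q₂) :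
    IsBBP (m + m) n (appendUpDown Q₁ Q₂) := by
  refine ⟨fun j => ?_, fun i hi j j' hjj => ?_⟩
  · induction j using Fin.addCases with
    | left j => rw [cnt_appendUpDown_castAdd, hQ₁.cnt_of_le j (by rw [add_mul]; omega)]
    | right j => rw [cnt_appendUpDown_natAdd, add_mul, Nat.add_sub_cancel, hQ₂.1 j]
  induction j using Fin.addCases with
  | left j =>
    induction j' using Fin.addCases with
    | left j' =>
      rw [cnt_appendUpDown_castAdd, cnt_appendUpDown_castAdd]
      rcases le_total i (m * n) with hi' | hi'
      · exact hQ₁.2 i hi' j j' hjj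
      · rw [hQ₁.cnt_of_le j hi', hQ₁.cnt_of_le j' hi']
    | right j' =>
      rw [cnt_appendUpDown_castAdd, cnt_appendUpDown_natAdd]
      rcases le_total i (m * n) with hi' | hi'
      · rw [Nat.sub_eq_zero_of_le hi', cnt_eq_stepCount, stepCount_zero]
        exact Nat.zero_le _
      · rw [hQ₁.cnt_of_le j hi']
        exact hQ₂.cnt_le j' _
  | right j =>
    induction j' using Fin.addCases with
    | left j' =>
      exact absurd hjj (by simp only [Fin.le_def, Fin.val_natAdd, Fin.val_castAdd]; omega)
    | right j' =>
      rw [cnt_appendUpDown_natAdd, cnt_appendUpDown_natAdd]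
      exact hQ₂.2 _ (by rw [add_mul] at hi; omega) j j' (Nat.le_of_add_le_add_left hjj)

end Append

theorem card_isBBP_forall_val_lt_iff {m n : ℕ} :
    Nat.card {P : Fin ((m + m) * n) → Fin (m + m) //
      IsBBP (m + m) n P ∧ ∀ t, (P t : ℕ) < m ↔ (t : ℕ) < m * n} = Cdim m n ^ 2 := by
  let f : {Q // IsBBP m n Q} × {Q // IsBBP m n Q} → {P : Fin ((m + m) * n) → Fin (m + m) //
      IsBBP (m + m) n P ∧ ∀ t, (P t : ℕ) < m ↔ (t : ℕ) < m * n} := fun Q =>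
    ⟨appendUpDown Q.1 Q.2, Q.1.2.appendUpDown Q.2.2,
      appendUpDown_val_lt_iff⟩
  have hf : Function.Bijective f := by
    refine ⟨fun Q R h => ?_, fun P => ?_⟩
    · obtain ⟨h₁, h₂⟩ := appendUpDown_injective2 (congrArg Subtype.val h)
      exact Prod.ext (Subtype.ext h₁) (Subtype.ext h₂)
    · obtain ⟨Q₁, Q₂, hQ⟩ := exists_appendUpDown_eq P.2.2
      have hP : IsBBP (m + m) n (appendUpDown Q₁ Q₂) := hQ ▸ P.2.1
      obtain ⟨hQ₁, hQ₂⟩ := hP.of_appendUpDown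
      exact ⟨(⟨Q₁, hQ₁⟩, ⟨Q₂, hQ₂⟩), Subtype.ext hQ⟩
  rw [← Nat.card_eq_of_bijective f hf, Nat.card_prod, Cdim, sq]

theorem stmt19 (k n : ℕ) (hk : 2 ≤ k) (hke : Even k) (hn : 1 ≤ n) :
    Nat.card {P : Fin (k*n) → Fin k // IsBBP k n P ∧ numPeaks k n P = 1}
        = (Cdim (k/2) n)^2 ∧
    ∀ P : Fin (k*n) → Fin k, IsBBP k n P →
      (numPeaks k n P = 1 ↔
        ∀ t : Fin (k*n), ((t : ℕ) < (k/2)*n → (P t : ℕ) < k/2) ∧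
          ((k/2)*n ≤ (t : ℕ) → k/2 ≤ (P t : ℕ))) := by
  obtain ⟨m, rfl⟩ := hke
  have hpeaks (P : Fin ((m + m) * n) → Fin (m + m)) (hP : IsBBP (m + m) n P) :
      numPeaks (m + m) n P = 1 ↔ ∀ t, (P t : ℕ) < m ↔ (t : ℕ) < m * n :=
    hP.numPeaks_eq_one_iff (by omega) hn
  rw [show (m + m) / 2 = m by omega]
  refine ⟨?_, fun P hP => (hpeaks P hP).trans (forall_congr' fun t => by omega)⟩
  rw [← card_isBBP_forall_val_lt_iff]
  exact Nat.card_congr (Equiv.subtypeEquivRight fun P => and_congr_right (hpeaks P))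
end
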